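/- Let k ≥ 1, q ∈ ℚ and n ≥ 1. Let M⁺ₙ(q) be the n×n Hessenberg matrix over ℚ[t₁,…,t_k] with entries (M⁺ₙ)_{i,j} = (1/i)·((i−j+1)q + (j−1))·t_{i−j+1} for 1 ≤ j ≤ i (in particular (M⁺ₙ)_{i,1} = q·t_i), (M⁺ₙ)_{i,i+1} = +1, and all other entries 0. Then perm M⁺ₙ(q) = F^q_{k,n}, where the permanent of an n×n matrix (a_{i,j}) is Σ_{σ ∈ Sₙ} Π_{i=1}^n a_{i,σ(i)}. -/

import Mathlib

open Finset MvPolynomial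

/-- The set of partitions `α ⊢ n` with parts at most `k`, encoded as tuples
`α = (α₁, …, α_k) ∈ ℕ^k` (0-indexed) with `∑ j, (j+1)·α_j = n`. -/
def partitions (k n : ℕ) : Finset (Fin k → ℕ) :=
  (Fintype.piFinset fun _ : Fin k => Finset.range (n + 1)).filter
    fun α => ∑ j : Fin k, (j.1 + 1) * α j = n

/-- The variable `t_{m+1}` of `ℚ[t₁,…,t_k]` (0-indexed), with the convention
`t_j = 0` for `j > k`. -/
noncomputable def tQ (k m : ℕ) : MvPolynomial (Fin k) ℚ :=
  if h : m < k then X ⟨m, h⟩ else 0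

/-- The Stirling operator of the first kind: `B q m = q(q+1)⋯(q+m-1)`, i.e.
`B q m = B_{m-1}(q)` in the paper's notation, with `B q 0 = B_{-1}(q) = 1`. -/
def B (q : ℚ) (m : ℕ) : ℚ := ∏ i ∈ Finset.range m, (q + i)

/-- The `q`-th convolution root of the generalized Fibonacci polynomial:
`F^q_{k,n} = ∑_{α ⊢ n} (B_{|α|-1}(q) / (α₁!⋯α_k!)) · t^α`, with `F^q_{k,0} = 1`. -/
noncomputable def Fq (k : ℕ) (q : ℚ) (n : ℕ) : MvPolynomial (Fin k) ℚ :=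
  if n = 0 then 1 else
    ∑ α ∈ partitions k n,
      C (B q (∑ j, α j) / ∏ j, ((α j).factorial : ℚ)) * ∏ j, X j ^ α j

/-- The permanent of an `n×n` matrix: `∑_{σ ∈ Sₙ} ∏ᵢ a_{i,σ(i)}`. -/
noncomputable def perm {n : ℕ} {R : Type*} [CommRing R] (M : Matrix (Fin n) (Fin n) R) : R :=
  ∑ σ : Equiv.Perm (Fin n), ∏ i, M i (σ i)

/-- The `n×n` Hessenberg matrix `M⁺ₙ(q)` (0-indexed): for 1-based indices
`i, j` with `j ≤ i` the entry is `(1/i)·((i-j+1)q + (j-1))·t_{i-j+1}`,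
the superdiagonal entries are `+1`, and all other entries are `0`. -/
noncomputable def Mplus (k n : ℕ) (q : ℚ) : Matrix (Fin n) (Fin n) (MvPolynomial (Fin k) ℚ) :=
  fun i j =>
    if j.1 ≤ i.1 then
      C ((((i.1 - j.1 + 1 : ℕ) : ℚ) * q + (j.1 : ℚ)) / ((i.1 : ℚ) + 1)) * tQ k (i.1 - j.1)
    else if j.1 = i.1 + 1 then 1
    else 0

/-!
Both sides satisfy the same recurrence in `n`. Expanding the permanent of a lower Hessenberg
matrix with unit superdiagonal along its last column gives
`perm M_{n+1} = ∑_{j ≤ n} (M_{n+1})_{n,j} · perm M_j`. For `F = Fq k q`, comparing coefficients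
of `t^d` with `∑ (i+1) d_i = n + 1` in `(n+1) F_{n+1} = ∑_{m ≤ n} ((m+1) q + n - m) t_{m+1} F_{n-m}`
reduces, via `d_i / d! = 1 / (d - e_i)!`, to the identity
`∑_i ((i+1) q + n - i) d_i = (n+1) (q + |d| - 1)` and to `B q |d| = B q (|d| - 1) · (q + |d| - 1)`.
-/

namespace Matrix

variable {R : Type*} [CommSemiring R]

theorem permanent_submatrix_equiv_self {n : Type*} [DecidableEq n] [Fintype n]
    (e : Equiv.Perm n) (A : Matrix n n R) : (A.submatrix e e).permanent = A.permanent := by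
  change ((A.submatrix e id).submatrix id e).permanent = _
  rw [permanent_permute_rows, permanent_permute_cols]

theorem permanent_succ_column_zero {n : ℕ} (A : Matrix (Fin (n + 1)) (Fin (n + 1)) R) :
    A.permanent = ∑ i, A i 0 * (A.submatrix i.succAbove Fin.succ).permanent := by
  rw [permanent, univ_perm_fin_succ, ← univ_product_univ]
  simp only [sum_map, Equiv.toEmbedding_apply, sum_product]
  refine sum_congr rfl fun i _ => Fin.cases ?_ (fun i => ?_) i
  · simp [permanent, mul_sum, Fin.prod_univ_succ, Fin.succAbove_zero]
  · -- `univ_perm_fin_succ` embeds `Perm (Fin n)` through a swap; reindexing by `cycleRange`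
    -- matches it with the minor
    rw [permanent, mul_sum]
    refine Fintype.sum_equiv (Equiv.mulLeft i.cycleRange) _ _ fun σ => ?_
    simp only [Fin.prod_univ_succ, Equiv.Perm.decomposeFin_symm_apply_zero,
      Equiv.Perm.decomposeFin_symm_apply_succ, submatrix_apply, Equiv.coe_mulLeft,
      Equiv.Perm.coe_mul, Function.comp_apply, Fin.succAbove_cycleRange]

theorem permanent_succ_column_last {n : ℕ} (A : Matrix (Fin (n + 1)) (Fin (n + 1)) R) :
    A.permanent =
      ∑ i, A i (Fin.last n) * (A.submatrix i.succAbove Fin.castSucc).permanent := by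
  rw [← permanent_submatrix_equiv_self Fin.revPerm, permanent_succ_column_zero]
  refine Fintype.sum_equiv Fin.revPerm _ _ fun i => ?_
  have minor : (A.submatrix Fin.revPerm Fin.revPerm).submatrix i.succAbove Fin.succ =
      (A.submatrix i.rev.succAbove Fin.castSucc).submatrix Fin.revPerm Fin.revPerm := by
    ext r c
    simp [Fin.rev_succAbove, Fin.rev_succ]
  rw [minor, permanent_submatrix_equiv_self]
  simp

end Matrix

lemma perm_eq_permanent {n : ℕ} {R : Type*} [CommRing R] (A : Matrix (Fin n) (Fin n) R) :
    perm A = A.permanent := by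
  rw [← Matrix.permanent_transpose]
  rfl

section Hessenberg

variable {R : Type*} [CommSemiring R]

/-- Indexed by `ℕ` rather than `Fin n`, so that the leading principal submatrices of
`hessenberg a n` are again of the form `hessenberg a m`. -/
def hessenbergEntry (a : ℕ → ℕ → R) (i j : ℕ) : R :=
  if j ≤ i then a i j else if j = i + 1 then 1 else 0

def hessenberg (a : ℕ → ℕ → R) (n : ℕ) : Matrix (Fin n) (Fin n) R :=
  Matrix.of fun i j => hessenbergEntry a i j

def hessenbergLastRow (a : ℕ → ℕ → R) (b : ℕ → R) (n : ℕ) : Matrix (Fin n) (Fin n) R :=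
  Matrix.of fun i j => if i.1 + 1 = n then b j else hessenbergEntry a i j

lemma hessenberg_succ_eq_lastRow (a : ℕ → ℕ → R) (n : ℕ) :
    hessenberg a (n + 1) = hessenbergLastRow a (a n) (n + 1) := by
  ext i j
  obtain hi | hi := eq_or_ne i.1 n
  · rw [hessenberg, hessenbergLastRow, Matrix.of_apply, Matrix.of_apply, if_pos (by omega),
      hessenbergEntry, if_pos (by omega), hi]
  · simp [hessenberg, hessenbergLastRow, hi]

/-- Expansion along the last column, whose only nonzero entries are `b (n + 1)` on the diagonal
and the `1` just above it. -/
lemma permanent_hessenbergLastRow_succ_succ (a : ℕ → ℕ → R) (b : ℕ → R) (n : ℕ) :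
    (hessenbergLastRow a b (n + 2)).permanent =
      b (n + 1) * (hessenberg a (n + 1)).permanent + (hessenbergLastRow a b (n + 1)).permanent := by
  rw [Matrix.permanent_succ_column_last, Fin.sum_univ_castSucc, Fin.sum_univ_castSucc]
  have entry_diag :
      hessenbergLastRow a b (n + 2) (Fin.last (n + 1)) (Fin.last (n + 1)) = b (n + 1) := by
    simp [hessenbergLastRow]
  have entry_superdiag :
      hessenbergLastRow a b (n + 2) (Fin.last n).castSucc (Fin.last (n + 1)) = 1 := by
    simp [hessenbergLastRow, hessenbergEntry]
  have entry_above : ∀ i : Fin n,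
      hessenbergLastRow a b (n + 2) i.castSucc.castSucc (Fin.last (n + 1)) = 0 := by
    intro i
    simp only [hessenbergLastRow, hessenbergEntry, Matrix.of_apply, Fin.val_castSucc,
      Fin.val_last]
    rw [if_neg (by omega), if_neg (by omega), if_neg (by omega)]
  have minor_diag : (hessenbergLastRow a b (n + 2)).submatrix (Fin.last (n + 1)).succAbove
      Fin.castSucc = hessenberg a (n + 1) := by
    ext r c
    simp only [Fin.succAbove_last, hessenbergLastRow, hessenberg, Matrix.submatrix_apply,
      Matrix.of_apply, Fin.val_castSucc]
    rw [if_neg (by omega)]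
  have minor_superdiag : (hessenbergLastRow a b (n + 2)).submatrix
      (Fin.last n).castSucc.succAbove Fin.castSucc = hessenbergLastRow a b (n + 1) := by
    ext r c
    induction r using Fin.lastCases with
    | last => simp [hessenbergLastRow]
    | cast r =>
      simp only [Matrix.submatrix_apply,
        Fin.succAbove_castSucc_of_lt _ _ (Fin.castSucc_lt_last r), hessenbergLastRow,
        Matrix.of_apply, Fin.val_castSucc]
      rw [if_neg (by omega), if_neg (by omega)]
  rw [sum_eq_zero fun i _ => by rw [entry_above, zero_mul], zero_add, entry_superdiag,
    entry_diag, minor_diag, minor_superdiag, one_mul, add_comm]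

lemma permanent_hessenbergLastRow (a : ℕ → ℕ → R) (b : ℕ → R) (n : ℕ) :
    (hessenbergLastRow a b (n + 1)).permanent =
      ∑ j ∈ range (n + 1), b j * (hessenberg a j).permanent := by
  induction n with
  | zero =>
    simp [Matrix.permanent_unique, hessenbergLastRow, Matrix.permanent_isEmpty]
  | succ n ih =>
    rw [permanent_hessenbergLastRow_succ_succ, ih, sum_range_succ _ (n + 1), add_comm]

lemma permanent_hessenberg_succ (a : ℕ → ℕ → R) (n : ℕ) :
    (hessenberg a (n + 1)).permanent =
      ∑ j ∈ range (n + 1), a n j * (hessenberg a j).permanent := by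
  rw [hessenberg_succ_eq_lastRow, permanent_hessenbergLastRow]

end Hessenberg

lemma sum_range_dite_eq_sum {M : Type*} [AddCommMonoid M] {k N : ℕ} (g : Fin k → M)
    (hg : ∀ i : Fin k, N ≤ i.1 → g i = 0) :
    ∑ m ∈ range N, (if h : m < k then g ⟨m, h⟩ else 0) = ∑ i, g i := by
  have vanish_k : ∀ m ≥ k, (if h : m < k then g ⟨m, h⟩ else 0) = 0 :=
    fun m hm => dif_neg (by omega)
  have vanish_N : ∀ m ≥ N, (if h : m < k then g ⟨m, h⟩ else 0) = 0 := by
    intro m hm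
    split_ifs
    exacts [hg _ hm, rfl]
  rw [sum_fin_eq_sum_range, ← eventually_constant_sum vanish_N (le_max_left N k),
    eventually_constant_sum vanish_k (le_max_right N k)]

lemma B_succ (q : ℚ) (m : ℕ) : B q (m + 1) = B q m * (q + m) :=
  prod_range_succ _ _

section Coefficients

variable {k : ℕ}

def fqCoeff (q : ℚ) (α : Fin k → ℕ) : ℚ :=
  B q (∑ j, α j) / ∏ j, ((α j).factorial : ℚ)

lemma mem_partitions {n : ℕ} {α : Fin k → ℕ} :
    α ∈ partitions k n ↔ ∑ j, (j.1 + 1) * α j = n := by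
  refine ⟨fun h => (mem_filter.1 h).2, fun h => mem_filter.2 ⟨?_, h⟩⟩
  refine Fintype.mem_piFinset.2 fun j => mem_range.2 ?_
  have : (j.1 + 1) * α j ≤ n := h ▸ single_le_sum (f := fun i : Fin k => (i.1 + 1) * α i)
    (fun i _ => Nat.zero_le _) (mem_univ j)
  nlinarith

lemma weight_eq_zero_iff {d : Fin k →₀ ℕ} : ∑ j, (j.1 + 1) * d j = 0 ↔ d = 0 := by
  simp [sum_eq_zero_iff, Finsupp.ext_iff]

lemma C_mul_prod_X_pow (c : ℚ) (α : Fin k → ℕ) :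
    C c * ∏ j, X j ^ α j = monomial (Finsupp.equivFunOnFinite.symm α) c := by
  rw [monomial_eq, Finsupp.prod_fintype _ _ fun _ => pow_zero _]
  rfl

lemma coeff_Fq (q : ℚ) (n : ℕ) (d : Fin k →₀ ℕ) :
    coeff d (Fq k q n) = if ∑ j, (j.1 + 1) * d j = n then fqCoeff q d else 0 := by
  by_cases hn : n = 0
  · subst hn
    rw [Fq, if_pos rfl, coeff_one]
    by_cases hd : d = 0
    · simp [hd, fqCoeff, B]
    · rw [if_neg (Ne.symm hd), if_neg (weight_eq_zero_iff.not.2 hd)]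
  · have coeff_term : ∀ α : Fin k → ℕ,
        coeff d (C (fqCoeff q α) * ∏ j, X j ^ α j) = if α = d then fqCoeff q α else 0 := by
      intro α
      simp only [C_mul_prod_X_pow, coeff_monomial, Equiv.symm_apply_eq]
      rfl
    rw [Fq, if_neg hn, coeff_sum]
    simp only [← fqCoeff.eq_def, coeff_term, sum_ite_eq', mem_partitions]

lemma sum_mul_single_add (w : Fin k → ℕ) (d : Fin k →₀ ℕ) (i : Fin k) :
    ∑ j, w j * (Finsupp.single i 1 + d : Fin k →₀ ℕ) j = ∑ j, w j * d j + w i := by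
  simp [mul_add, sum_add_distrib, Finsupp.single_apply, add_comm]

lemma prod_factorial_single_add (d : Fin k →₀ ℕ) (i : Fin k) :
    ∏ j, (((Finsupp.single i 1 + d : Fin k →₀ ℕ) j).factorial : ℚ) =
      (d i + 1) * ∏ j, ((d j).factorial : ℚ) := by
  rw [← mul_prod_erase _ _ (mem_univ i), ← mul_prod_erase _ (fun j => ((d j).factorial : ℚ))
    (mem_univ i), ← mul_assoc]
  congr 1
  · rw [Finsupp.add_apply, Finsupp.single_eq_same, add_comm 1, Nat.factorial_succ]
    push_cast
    ring
  · refine prod_congr rfl fun j hj => ?_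
    simp [Ne.symm (ne_of_mem_erase hj)]

lemma coeff_X_mul_Fq (q : ℚ) (m : ℕ) (i : Fin k) (d : Fin k →₀ ℕ) :
    coeff d (X i * Fq k q m) =
      if ∑ j, (j.1 + 1) * d j = m + (i.1 + 1) then
        d i * B q (∑ j, d j - 1) / ∏ j, ((d j).factorial : ℚ)
      else 0 := by
  by_cases hi : d i = 0
  · simp [coeff_X_mul', hi]
  obtain ⟨d, rfl⟩ : ∃ d', d = Finsupp.single i 1 + d' :=
    ⟨d - Finsupp.single i 1, (add_tsub_cancel_of_le (Finsupp.single_le_iff.2 (by omega))).symm⟩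
  have degree : ∑ j, (Finsupp.single i 1 + d : Fin k →₀ ℕ) j = ∑ j, d j + 1 := by
    simpa using sum_mul_single_add (fun _ => 1) d i
  simp only [coeff_X_mul, coeff_Fq, sum_mul_single_add, add_left_inj, degree,
    Nat.add_sub_cancel, prod_factorial_single_add, fqCoeff]
  have : ((d i : ℚ) + 1) ≠ 0 := by positivity
  split_ifs
  · rw [Finsupp.add_apply, Finsupp.single_eq_same, Nat.cast_add, Nat.cast_one, add_comm 1]
    field_simp
  · rfl

lemma coeff_tQ_mul_Fq (q : ℚ) {m n : ℕ} (hm : m ≤ n) (d : Fin k →₀ ℕ) :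
    coeff d (tQ k m * Fq k q (n - m)) =
      if ∑ j, (j.1 + 1) * d j = n + 1 then
        ((if h : m < k then d ⟨m, h⟩ else 0 : ℕ) : ℚ) * B q (∑ j, d j - 1) /
          ∏ j, ((d j).factorial : ℚ)
      else 0 := by
  by_cases h : m < k
  · rw [tQ, dif_pos h, dif_pos h, coeff_X_mul_Fq, show n - m + (m + 1) = n + 1 by omega]
  · simp [tQ, h]

lemma val_lt_of_weight_eq {n : ℕ} {d : Fin k →₀ ℕ} (hd : ∑ j, (j.1 + 1) * d j = n) {i : Fin k}
    (hi : d i ≠ 0) : i.1 < n := by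
  have : (i.1 + 1) * d i ≤ n := hd ▸ single_le_sum
    (f := fun j : Fin k => (j.1 + 1) * d j) (fun _ _ => Nat.zero_le _) (mem_univ i)
  nlinarith [Nat.one_le_iff_ne_zero.2 hi]

lemma sum_mul_parts_of_weight_eq (q : ℚ) (n : ℕ) (d : Fin k →₀ ℕ)
    (hd : ∑ j, (j.1 + 1) * d j = n + 1) :
    ∑ i : Fin k, (((i.1 + 1 : ℕ) : ℚ) * q + ((n - i.1 : ℕ) : ℚ)) * d i =
      (n + 1) * (q + (∑ j, d j : ℕ) - 1) := by
  have weight_cast : ∑ i : Fin k, ((i.1 + 1 : ℕ) : ℚ) * d i = n + 1 := by exact_mod_cast hd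
  calc ∑ i : Fin k, (((i.1 + 1 : ℕ) : ℚ) * q + ((n - i.1 : ℕ) : ℚ)) * d i
      = ∑ i : Fin k, ((q - 1) * (((i.1 + 1 : ℕ) : ℚ) * d i) + (n + 1) * d i) := by
        refine sum_congr rfl fun i _ => ?_
        by_cases hi : d i = 0
        · simp [hi]
        · rw [Nat.cast_sub (Nat.lt_succ_iff.1 (val_lt_of_weight_eq hd hi))]
          push_cast
          ring
    _ = (n + 1) * (q + (∑ j, d j : ℕ) - 1) := by
        rw [sum_add_distrib, ← mul_sum, ← mul_sum, weight_cast]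
        push_cast
        ring

lemma sum_range_mul_parts_of_weight_eq (q : ℚ) (n : ℕ) (d : Fin k →₀ ℕ)
    (hd : ∑ j, (j.1 + 1) * d j = n + 1) :
    ∑ j ∈ range (n + 1), ((((n - j + 1 : ℕ) : ℚ) * q + j) / (n + 1)) *
        ((if h : n - j < k then d ⟨n - j, h⟩ else 0 : ℕ) : ℚ) =
      q + (∑ j, d j : ℕ) - 1 := by
  set g : Fin k → ℚ := fun i => (((i.1 + 1 : ℕ) : ℚ) * q + ((n - i.1 : ℕ) : ℚ)) * d i
  have vanish : ∀ i : Fin k, n + 1 ≤ i.1 → g i = 0 := by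
    intro i hi
    have : d i = 0 := by
      by_contra h
      have := val_lt_of_weight_eq hd h
      omega
    simp [g, this]
  calc _ = ∑ j ∈ range (n + 1), (if h : n - j < k then g ⟨n - j, h⟩ else 0) / (n + 1) := by
        refine sum_congr rfl fun j hj => ?_
        have hjn : n - (n - j) = j := Nat.sub_sub_self (Nat.lt_succ_iff.1 (mem_range.1 hj))
        split_ifs <;> simp [g, hjn, div_mul_eq_mul_div]
    _ = ∑ m ∈ range (n + 1), (if h : m < k then g ⟨m, h⟩ else 0) / (n + 1) :=
        sum_range_reflect (fun m => (if h : m < k then g ⟨m, h⟩ else 0) / (n + 1)) (n + 1)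
    _ = _ := by
        rw [← sum_div, sum_range_dite_eq_sum g vanish, sum_mul_parts_of_weight_eq q n d hd]
        field_simp

end Coefficients

noncomputable def mplusEntry (k : ℕ) (q : ℚ) (i j : ℕ) : MvPolynomial (Fin k) ℚ :=
  C ((((i - j + 1 : ℕ) : ℚ) * q + j) / (i + 1)) * tQ k (i - j)

lemma Mplus_eq_hessenberg (k n : ℕ) (q : ℚ) : Mplus k n q = hessenberg (mplusEntry k q) n :=
  rfl

lemma Fq_succ (k : ℕ) (q : ℚ) (n : ℕ) :
    Fq k q (n + 1) = ∑ j ∈ range (n + 1), mplusEntry k q n j * Fq k q j := by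
  ext d
  have coeff_term : ∀ j ∈ range (n + 1), coeff d (mplusEntry k q n j * Fq k q j) =
      ((((n - j + 1 : ℕ) : ℚ) * q + j) / (n + 1)) *
        if ∑ i, (i.1 + 1) * d i = n + 1 then
          ((if h : n - j < k then d ⟨n - j, h⟩ else 0 : ℕ) : ℚ) * B q (∑ i, d i - 1) /
            ∏ i, ((d i).factorial : ℚ)
        else 0 := by
    intro j hj
    rw [mplusEntry, mul_assoc, coeff_C_mul, ← coeff_tQ_mul_Fq q (Nat.sub_le n j),
      Nat.sub_sub_self (Nat.lt_succ_iff.1 (mem_range.1 hj))]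
  rw [coeff_Fq, coeff_sum, sum_congr rfl coeff_term]
  split_ifs with hd
  · obtain ⟨s, hs⟩ : ∃ s, ∑ i, d i = s + 1 := by
      refine Nat.exists_eq_succ_of_ne_zero fun h => ?_
      simp_all [sum_eq_zero_iff]
    simp only [mul_div_assoc, ← mul_assoc, ← sum_mul, sum_range_mul_parts_of_weight_eq q n d hd]
    rw [fqCoeff, hs, B_succ, Nat.add_sub_cancel]
    push_cast
    ring
  · simp

theorem perm_Mplus_eq_Fq_general (k n : ℕ) (q : ℚ) :
    perm (Mplus k n q) = Fq k q n := by
  induction n using Nat.strong_induction_on with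
  | _ n ih =>
    cases n with
    | zero => simp [perm, Fq]
    | succ n =>
      rw [perm_eq_permanent, Mplus_eq_hessenberg, permanent_hessenberg_succ, Fq_succ]
      refine sum_congr rfl fun j hj => ?_
      rw [← Mplus_eq_hessenberg, ← perm_eq_permanent, ih j (mem_range.1 hj)]

theorem perm_Mplus_eq_Fq (k n : ℕ) (hk : 1 ≤ k) (hn : 1 ≤ n) (q : ℚ) :
    perm (Mplus k n q) = Fq k q n :=
  perm_Mplus_eq_Fq_general k n q
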